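/- For every α ∈ ℂ one has the identity of polynomials S_α⁰ 1 = 2α (α − α_{1,2})(α − α_{2,1}) x₂ in R, where 1 denotes the constant polynomial 1. -/
import Mathlib


open MvPolynomial

noncomputable section

/-- The polynomial ring `ℂ[(x_n), (y_n)]`: `Sum.inl n ↦ x_n`, `Sum.inr n ↦ y_n`. -/
abbrev FockRing : Type := MvPolynomial (ℕ ⊕ ℕ) ℂ

/-- Heisenberg operators `A_n`. -/
def Aop : ℤ → FockRing → FockRing := fun n p =>
  if 0 < n then (Complex.I / 2) • pderiv (Sum.inl n.toNat) p
  else if n < 0 then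
    (Complex.I / 2) •
      (pderiv (Sum.inr (-n).toNat) p -
        ((2 * (-n) : ℤ) : ℂ) • (X (Sum.inl (-n).toNat) * p))
  else 0

/-- Heisenberg operators `Ã_n`. -/
def Atop : ℤ → FockRing → FockRing := fun n p =>
  if 0 < n then (Complex.I / 2) • pderiv (Sum.inr n.toNat) p
  else if n < 0 then
    (Complex.I / 2) •
      (pderiv (Sum.inl (-n).toNat) p -
        ((2 * (-n) : ℤ) : ℂ) • (X (Sum.inr (-n).toNat) * p))
  else 0

/-- Sugawara operator `L_{-n}^{0,α}` for `n ≥ 1`. -/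
def Lop (γ : ℝ) (α : ℂ) (n : ℕ) (p : FockRing) : FockRing :=
  (Complex.I * (α + ((n : ℂ) - 1) * ((γ : ℂ) / 2 + 2 / (γ : ℂ)))) • Aop (-(n : ℤ)) p +
    ∑ᶠ m ∈ {m : ℤ | m ≠ 0 ∧ m ≠ -(n : ℤ)}, Aop (-(n : ℤ) - m) (Aop m p)

/-- Sugawara operator `L̃_{-n}^{0,α}` for `n ≥ 1`. -/
def Ltop (γ : ℝ) (α : ℂ) (n : ℕ) (p : FockRing) : FockRing :=
  (Complex.I * (α + ((n : ℂ) - 1) * ((γ : ℂ) / 2 + 2 / (γ : ℂ)))) • Atop (-(n : ℤ)) p +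
    ∑ᶠ m ∈ {m : ℤ | m ≠ 0 ∧ m ≠ -(n : ℤ)}, Atop (-(n : ℤ) - m) (Atop m p)

/-- `S_α⁰ = α² L_{-2}^{0,α} + (L_{-1}^{0,α})²`. -/
def Sop (γ : ℝ) (α : ℂ) (p : FockRing) : FockRing :=
  α ^ 2 • Lop γ α 2 p + Lop γ α 1 (Lop γ α 1 p)

/-- `S̃_α⁰ = α² L̃_{-2}^{0,α} + (L̃_{-1}^{0,α})²`. -/
def Stop (γ : ℝ) (α : ℂ) (p : FockRing) : FockRing :=
  α ^ 2 • Ltop γ α 2 p + Ltop γ α 1 (Ltop γ α 1 p)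

end


lemma Aop_pos {n : ℤ} (h : 0 < n) (p : FockRing) :
    Aop n p = (Complex.I / 2) • pderiv (Sum.inl n.toNat) p := by
  unfold Aop; rw [if_pos h]

lemma Aop_neg {n : ℤ} (h : n < 0) (p : FockRing) :
    Aop n p = (Complex.I / 2) •
      (pderiv (Sum.inr (-n).toNat) p -
        ((2 * (-n) : ℤ) : ℂ) • (X (Sum.inl (-n).toNat) * p)) := by
  unfold Aop; rw [if_neg (by omega), if_pos h]

lemma Aop_zero_p (n : ℤ) : Aop n 0 = 0 := by
  unfold Aop; split_ifs <;> simp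

lemma Aop_smul (n : ℤ) (c : ℂ) (p : FockRing) : Aop n (c • p) = c • Aop n p := by
  unfold Aop; split_ifs <;>
    simp [smul_sub, mul_smul_comm, smul_comm c, map_smul]

lemma Aop_one (m : ℤ) :
    Aop m 1 = if m < 0 then (Complex.I * m) • X (Sum.inl (-m).toNat) else 0 := by
  rcases lt_trichotomy m 0 with h | h | h
  · rw [Aop_neg h, if_pos h]
    rw [mul_one, pderiv_one, zero_sub, smul_neg, smul_smul, ← neg_smul]
    congr 1; push_cast; ring
  · subst h; simp [Aop]
  · rw [Aop_pos h, if_neg (by omega), pderiv_one, smul_zero]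

lemma Aop_neg_one_X1 :
    Aop (-1) (X (Sum.inl 1)) = (-Complex.I) • (X (Sum.inl 1) * X (Sum.inl 1)) := by
  rw [Aop_neg (by norm_num)]
  rw [show ((-(-1:ℤ)).toNat) = 1 from rfl, pderiv_X_of_ne (by simp), zero_sub, smul_neg,
    smul_smul, ← neg_smul]
  congr 1
  push_cast
  ring

lemma L1_one (γ : ℝ) (α : ℂ) : Lop γ α 1 1 = α • X (Sum.inl 1) := by
  unfold Lop
  have hsum : ∑ᶠ m ∈ {m : ℤ | m ≠ 0 ∧ m ≠ -((1:ℕ) : ℤ)}, Aop (-((1:ℕ) : ℤ) - m) (Aop m 1) = 0 := by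
    apply finsum_mem_of_eqOn_zero
    intro m hm
    obtain ⟨hm0, hm1⟩ := hm
    simp only [Pi.zero_apply]
    rcases lt_trichotomy m 0 with h | h | h
    · rw [Aop_one, if_pos h, Aop_smul, Aop_pos (by push_cast; omega : (0:ℤ) < -((1:ℕ):ℤ) - m)]
      rw [pderiv_X_of_ne (by simp; omega), smul_zero, smul_zero]
    · exact absurd h hm0
    · rw [Aop_one, if_neg (by omega), Aop_zero_p]
  rw [hsum, add_zero, Aop_one, if_pos (show -((1:ℕ):ℤ) < 0 by norm_num), smul_smul]
  rw [show (Sum.inl (- -((1:ℕ):ℤ)).toNat : ℕ ⊕ ℕ) = Sum.inl 1 from rfl]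
  congr 1
  push_cast
  linear_combination (-α) * Complex.I_sq

lemma L2_one (γ : ℝ) (α : ℂ) :
    Lop γ α 2 1 = (2 * (α + ((γ:ℂ)/2 + 2/(γ:ℂ)))) • X (Sum.inl 2)
      - X (Sum.inl 1) * X (Sum.inl 1) := by
  unfold Lop
  have hvan : ∀ m : ℤ, m ≠ 0 → m ≠ -2 → m ≠ -1 → Aop (-((2:ℕ):ℤ) - m) (Aop m 1) = 0 := by
    intro m h0 h2 h1
    rcases lt_trichotomy m 0 with h | h | h
    · rw [Aop_one, if_pos h, Aop_smul,
        Aop_pos (show (0:ℤ) < -((2:ℕ):ℤ) - m by push_cast; omega),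
        pderiv_X_of_ne (by simp; omega), smul_zero, smul_zero]
    · exact absurd h h0
    · rw [Aop_one, if_neg (by omega), Aop_zero_p]
  have hsum : ∑ᶠ m ∈ {m : ℤ | m ≠ 0 ∧ m ≠ -((2:ℕ):ℤ)}, Aop (-((2:ℕ):ℤ) - m) (Aop m 1)
      = ∑ m ∈ ({-1} : Finset ℤ), Aop (-((2:ℕ):ℤ) - m) (Aop m 1) := by
    apply finsum_mem_eq_sum_of_inter_support_eq
    ext m
    simp only [Set.mem_inter_iff, Set.mem_setOf_eq, Function.mem_support, Finset.coe_singleton,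
      Set.mem_singleton_iff]
    constructor
    · rintro ⟨⟨h0, h2⟩, hne⟩
      refine ⟨?_, hne⟩
      by_contra h1
      exact hne (hvan m h0 (by exact_mod_cast h2) h1)
    · rintro ⟨rfl, hne⟩
      exact ⟨⟨by norm_num, by push_cast⟩, hne⟩
  rw [hsum, Finset.sum_singleton]
  have e1 : Aop (-((2:ℕ):ℤ) - (-1)) (Aop (-1) 1) = -(X (Sum.inl 1) * X (Sum.inl 1)) := by
    rw [show (-((2:ℕ):ℤ) - (-1)) = (-1 : ℤ) by push_cast,
      Aop_one, if_pos (by norm_num),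
      show (Sum.inl ((- -1 : ℤ)).toNat : ℕ ⊕ ℕ) = Sum.inl 1 from rfl,
      Aop_smul, Aop_neg_one_X1, smul_smul, ← neg_one_smul ℂ (X (Sum.inl 1) * X (Sum.inl 1))]
    congr 1
    push_cast
    linear_combination Complex.I_sq
  have e2 : (Complex.I * (α + (((2:ℕ):ℂ) - 1) * ((γ:ℂ)/2 + 2/(γ:ℂ)))) • Aop (-((2:ℕ):ℤ)) 1
      = (2 * (α + ((γ:ℂ)/2 + 2/(γ:ℂ)))) • X (Sum.inl 2) := by
    rw [Aop_one, if_pos (show -((2:ℕ):ℤ) < 0 by push_cast), smul_smul,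
      show (Sum.inl ((- -((2:ℕ):ℤ)).toNat) : ℕ ⊕ ℕ) = Sum.inl 2 from rfl]
    congr 1
    push_cast
    linear_combination (-2*α - (γ:ℂ) - 4/(γ:ℂ)) * Complex.I_sq
  rw [e1, e2, sub_eq_add_neg]

lemma L1_cX1 (γ : ℝ) (α : ℂ) (c : ℂ) :
    Lop γ α 1 (c • X (Sum.inl 1)) =
      c • ((α • (X (Sum.inl 1) * X (Sum.inl 1))) + (2:ℂ) • X (Sum.inl 2)) := by
  unfold Lop
  have hvan : ∀ m : ℤ, m ≠ 0 → m ≠ -1 → m ≠ 1 → m ≠ -2 →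
      Aop (-((1:ℕ):ℤ) - m) (Aop m (c • X (Sum.inl 1))) = 0 := by
    intro m h0 h1 hp1 h2
    rcases lt_trichotomy m 0 with h | h | h
    · have hne1 : (Sum.inl (1:ℕ) : ℕ ⊕ ℕ) ≠ Sum.inr ((-m).toNat) := by simp
      have hp : (0:ℤ) < -((1:ℕ):ℤ) - m := by push_cast; omega
      have hne2 : (Sum.inl ((-m).toNat) : ℕ ⊕ ℕ) ≠ Sum.inl ((-((1:ℕ):ℤ) - m).toNat) := by
        simp; omega
      have hne3 : (Sum.inl (1:ℕ) : ℕ ⊕ ℕ) ≠ Sum.inl ((-((1:ℕ):ℤ) - m).toNat) := by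
        simp; push_cast; omega
      rw [Aop_smul, Aop_neg h, pderiv_X_of_ne hne1, Aop_smul, Aop_smul,
        Aop_pos hp, zero_sub, map_neg, Derivation.map_smul, pderiv_mul,
        pderiv_X_of_ne hne2, pderiv_X_of_ne hne3]
      simp
    · exact absurd h h0
    · have hne1 : (Sum.inl (1:ℕ) : ℕ ⊕ ℕ) ≠ Sum.inl (m.toNat) := by simp; omega
      rw [Aop_smul, Aop_pos h, pderiv_X_of_ne hne1]
      simp [Aop_zero_p]
  have hsum : ∑ᶠ m ∈ {m : ℤ | m ≠ 0 ∧ m ≠ -((1:ℕ):ℤ)},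
        Aop (-((1:ℕ):ℤ) - m) (Aop m (c • X (Sum.inl 1)))
      = ∑ m ∈ ({1, -2} : Finset ℤ), Aop (-((1:ℕ):ℤ) - m) (Aop m (c • X (Sum.inl 1))) := by
    apply finsum_mem_eq_sum_of_inter_support_eq
    ext m
    simp only [Set.mem_inter_iff, Set.mem_setOf_eq, Function.mem_support, Finset.coe_insert,
      Finset.coe_singleton, Set.mem_insert_iff, Set.mem_singleton_iff]
    constructor
    · rintro ⟨⟨h0, h1⟩, hne⟩
      refine ⟨?_, hne⟩
      by_contra hm
      push_neg at hm
      exact hne (hvan m h0 (by exact_mod_cast h1) hm.1 hm.2)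
    · rintro ⟨rfl | rfl, hne⟩
      · exact ⟨⟨by norm_num, by push_cast⟩, hne⟩
      · exact ⟨⟨by norm_num, by push_cast⟩, hne⟩
  have e1 : Aop (-((1:ℕ):ℤ) - 1) (Aop 1 (c • X (Sum.inl 1))) = c • X (Sum.inl 2) := by
    rw [Aop_smul, Aop_pos (by norm_num : (0:ℤ) < 1),
      show ((1:ℤ).toNat) = 1 from rfl, pderiv_X_self, Aop_smul, Aop_smul,
      show (-((1:ℕ):ℤ) - 1) = (-2 : ℤ) by push_cast,
      Aop_one, if_pos (by norm_num)]
    rw [show (Sum.inl ((- (-2:ℤ)).toNat) : ℕ ⊕ ℕ) = Sum.inl 2 from rfl,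
      smul_smul, smul_smul]
    congr 1
    push_cast
    linear_combination (-c) * Complex.I_sq
  have e2 : Aop (-((1:ℕ):ℤ) - (-2)) (Aop (-2) (c • X (Sum.inl 1))) = c • X (Sum.inl 2) := by
    have hd : pderiv (Sum.inl (((1:ℤ)).toNat))
        ((X (Sum.inl ((-(-2:ℤ)).toNat)) * X (Sum.inl 1) : FockRing)) = X (Sum.inl 2) := by
      rw [show ((-(-2:ℤ)).toNat) = 2 from rfl, show ((1:ℤ).toNat) = 1 from rfl,
        pderiv_mul, pderiv_X_of_ne (by simp), pderiv_X_self]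
      ring
    rw [Aop_smul, Aop_neg (by norm_num : (-2:ℤ) < 0),
      pderiv_X_of_ne (by simp), zero_sub, Aop_smul, Aop_smul,
      show (-((1:ℕ):ℤ) - (-2)) = (1 : ℤ) by push_cast,
      Aop_pos (by norm_num : (0:ℤ) < 1), map_neg, Derivation.map_smul, hd]
    rw [smul_neg, smul_smul, smul_neg, smul_smul, smul_smul, ← neg_smul]
    congr 1
    push_cast
    linear_combination (-c) * Complex.I_sq
  have e0 : (Complex.I * (α + (((1:ℕ):ℂ) - 1) * ((γ:ℂ)/2 + 2/(γ:ℂ)))) •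
      Aop (-((1:ℕ):ℤ)) (c • X (Sum.inl 1)) = (c * α) • (X (Sum.inl 1) * X (Sum.inl 1)) := by
    rw [Aop_smul, show (-((1:ℕ):ℤ)) = (-1:ℤ) by push_cast, Aop_neg_one_X1,
      smul_smul, smul_smul]
    congr 1
    push_cast
    linear_combination (-c * α) * Complex.I_sq
  rw [hsum, Finset.sum_insert (by norm_num), Finset.sum_singleton, e0, e1, e2]
  rw [smul_add, smul_smul, smul_smul]
  rw [show c * α = α * c from mul_comm c α, show (c:ℂ) * 2 = 2 * c from mul_comm c 2]
  module

theorem stmt12 (γ : ℝ) (hγ0 : 0 < γ) (hγ2 : γ < 2) (α : ℂ) :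
    Sop γ α 1 =
      C (2 * α * (α - (-2 / (γ : ℂ))) * (α - (-(γ : ℂ) / 2))) * X (Sum.inl 2) := by
  have hγ : (γ:ℂ) ≠ 0 := Complex.ofReal_ne_zero.mpr hγ0.ne'
  unfold Sop
  rw [L2_one, L1_one, L1_cX1, ← smul_eq_C_mul]
  match_scalars
  · field_simp
    ring
  · ring
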